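/- arXiv:1709.05174 — 3 statements merged into one kernel-verified Lean document; each statement's English description precedes it below -/
import Mathlib

section
/- Let p be a pmf on X×Y (X, Y finite) with p(x,y) > 0 for all (x,y). Define F(p) as the minimum, over all product pmfs q(x,y) = q_X(x)·q_Y(y) on X×Y, of ( max_{x,y} p(x,y)/q(x,y) )·( max_{x,y} q(x,y)/p(x,y) ), with the convention c/0 = +∞ for c > 0. Then F(p) = 1/ε₁(p). -/
/-- A probability mass function on a finite set `S`. -/
def IsPMF {S : Type*} [Fintype S] (p : S → ℝ) : Prop :=
  (∀ s, 0 ≤ p s) ∧ ∑ s, p s = 1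

/-- The value assigned to a path `(x₁,y₁,…,x_k,y_k)` (indexed here by `Fin (m+1)`,
so `k = m+1 ≥ 1`).  Subtraction in `Fin (m+1)` is cyclic, so the denominator is
`p(x₁,y_k) · ∏_{i=2}^k p(x_i,y_{i-1})`. -/
noncomputable def pathValue {X Y : Type*} [Fintype X] [Fintype Y] (p : X × Y → ℝ)
    {m : ℕ} (x : Fin (m + 1) → X) (y : Fin (m + 1) → Y) : ℝ :=
  ((∏ i, p (x i, y i)) / ∏ i, p (x i, y (i - 1))) ^ (1 / (m + 1 : ℝ))

/-- A path is admissible if the `x_i` are pairwise distinct, the `y_i` are pairwise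
distinct, `p(x₁,y_k) > 0`, and `p(x_i,y_{i-1}) > 0` for `2 ≤ i ≤ k`. -/
def IsAdmissiblePath {X Y : Type*} [Fintype X] [Fintype Y] (p : X × Y → ℝ)
    {m : ℕ} (x : Fin (m + 1) → X) (y : Fin (m + 1) → Y) : Prop :=
  Function.Injective x ∧ Function.Injective y ∧ ∀ i, 0 < p (x i, y (i - 1))

/-- `ε₁(p)`: the minimum value over all admissible paths. -/
noncomputable def eps1 {X Y : Type*} [Fintype X] [Fintype Y] (p : X × Y → ℝ) : ℝ :=
  sInf { v : ℝ | ∃ (m : ℕ) (x : Fin (m + 1) → X) (y : Fin (m + 1) → Y),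
    IsAdmissiblePath p x y ∧ v = pathValue p x y }

/-!
For a product `q = qX ⊗ qY` with `p ≤ A q` and `q ≤ B p`, the factors of `q` cancel around any
closed path, so every path ratio is at least `(A B)⁻ᵏ`; hence `F(p) ≥ 1 / ε₁(p)`.

Conversely, cutting a closed path at a repeated `x` or `y` shows that every closed path, admissible
or not, has ratio at least `ε₁ᵏ`. Thus the cost `c x x' = -log ε₁ + min_y log (p (x,y) / p (x',y))`
has no negative closed walk, so shortest-walk potentials `φ` exist, and `f = exp (-φ)`,
`g y = min_x p (x,y) exp (φ x)` satisfy `ε₁ p ≤ f ⊗ g ≤ p`. Normalizing `f` and `g` gives a product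
pmf whose spread is at most `1 / ε₁`.
-/

open Finset Real

theorem Fin.val_neg_one {n : ℕ} [NeZero n] : ((-1 : Fin n) : ℕ) = n - 1 := by
  obtain ⟨k, rfl⟩ := Nat.exists_eq_succ_of_ne_zero (NeZero.ne n)
  simp

theorem Fin.val_sub_one {n : ℕ} [NeZero n] (i : Fin n) :
    ((i - 1 : Fin n) : ℕ) = if (i : ℕ) = 0 then n - 1 else i - 1 := by
  split_ifs with hi
  · rw [Fin.val_eq_zero_iff.1 hi, zero_sub, Fin.val_neg_one]
  · exact Fin.val_sub_one_of_ne_zero (Fin.val_ne_zero_iff.1 hi)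

section Cycle

variable {Z M : Type*} [CommMonoid M]

def cycleProd (T : Z → Z → M) {n : ℕ} [NeZero n] (z : Fin n → Z) : M :=
  ∏ i, T (z i) (z (i - 1))

variable {T : Z → Z → M}

theorem cycleProd_comp_add_right {n : ℕ} [NeZero n] (z : Fin n → Z) (k : Fin n) :
    cycleProd T (fun i => z (i + k)) = cycleProd T z :=
  Fintype.prod_equiv (Equiv.addRight k) _ _ fun i => by simp [sub_add_eq_add_sub]

theorem cycleProd_eq_mul_prod_compl {n : ℕ} [NeZero n] (z : Fin n → Z) :
    cycleProd T z = T (z 0) (z (-1)) * ∏ i ∈ {0}ᶜ, T (z i) (z (i - 1)) := by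
  rw [cycleProd, Fintype.prod_eq_mul_prod_compl 0, zero_sub]

theorem cycleProd_append {a b : ℕ} [NeZero a] [NeZero b] (z₁ : Fin a → Z) (z₂ : Fin b → Z)
    (h : T (z₁ 0) (z₂ (-1)) * T (z₂ 0) (z₁ (-1)) = T (z₁ 0) (z₁ (-1)) * T (z₂ 0) (z₂ (-1))) :
    cycleProd T (Fin.append z₁ z₂) = cycleProd T z₁ * cycleProd T z₂ := by
  have ha := NeZero.pos a
  have hb := NeZero.pos b
  have hl₀ : (Fin.castAdd b 0 - 1 : Fin (a + b)) = Fin.natAdd a (-1) := by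
    ext
    simp only [Fin.val_sub_one, Fin.val_castAdd, Fin.coe_ofNat_eq_mod, Nat.zero_mod, ↓reduceIte,
      Fin.val_natAdd, Fin.val_neg_one]
    omega
  have hr₀ : (Fin.natAdd a 0 - 1 : Fin (a + b)) = Fin.castAdd b (-1) := by
    ext
    simp only [Fin.val_sub_one, Fin.val_natAdd, Fin.coe_ofNat_eq_mod, Nat.zero_mod, add_zero,
      Fin.val_castAdd, Fin.val_neg_one, ite_eq_right_iff]
    omega
  have hleft : ∏ l ∈ {0}ᶜ, T (z₁ l) (Fin.append z₁ z₂ (Fin.castAdd b l - 1)) =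
      ∏ l ∈ {0}ᶜ, T (z₁ l) (z₁ (l - 1)) := by
    refine prod_congr rfl fun l hl => ?_
    replace hl : l ≠ 0 := by simpa using hl
    have : (Fin.castAdd b l - 1 : Fin (a + b)) = Fin.castAdd b (l - 1) := by
      ext; simp [Fin.val_sub_one, hl]
    rw [this, Fin.append_left]
  have hright : ∏ l ∈ {0}ᶜ, T (z₂ l) (Fin.append z₁ z₂ (Fin.natAdd a l - 1)) =
      ∏ l ∈ {0}ᶜ, T (z₂ l) (z₂ (l - 1)) := by
    refine prod_congr rfl fun l hl => ?_
    replace hl : l ≠ 0 := by simpa using hl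
    have : (Fin.natAdd a l - 1 : Fin (a + b)) = Fin.natAdd a (l - 1) := by
      have := Fin.val_ne_zero_iff.2 hl
      ext
      simp only [Fin.val_sub_one, Fin.val_natAdd, Nat.add_eq_zero_iff, this, and_false, ↓reduceIte]
      omega
    rw [this, Fin.append_right]
  rw [cycleProd, Fin.prod_univ_add, Fintype.prod_eq_mul_prod_compl 0,
    Fintype.prod_eq_mul_prod_compl (0 : Fin b), cycleProd_eq_mul_prod_compl z₁,
    cycleProd_eq_mul_prod_compl z₂]
  simp only [hl₀, hr₀, Fin.append_left, Fin.append_right, hleft, hright]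
  rw [mul_mul_mul_comm, h, mul_mul_mul_comm]

/-- Reattaching `i` to the predecessor of `j` and `j` to that of `i` cuts the cycle into the arcs
`[i, j)` and `[j, i)`; `h` says that this does not change the product. -/
theorem exists_cycleProd_eq_mul {n : ℕ} [NeZero n] (z : Fin n → Z) {i j : Fin n} (hij : i ≠ j)
    (h : T (z i) (z (i - 1)) * T (z j) (z (j - 1)) = T (z i) (z (j - 1)) * T (z j) (z (i - 1))) :
    ∃ (m₁ m₂ : ℕ) (z₁ : Fin (m₁ + 1) → Z) (z₂ : Fin (m₂ + 1) → Z), m₁ + m₂ + 2 = n ∧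
      cycleProd T z = cycleProd T z₁ * cycleProd T z₂ := by
  obtain ⟨m₁, m₂, rfl, hji⟩ : ∃ m₁ m₂, n = m₁ + 1 + (m₂ + 1) ∧ ((j - i : Fin n) : ℕ) = m₁ + 1 := by
    have h₀ : ((j - i : Fin n) : ℕ) ≠ 0 := Fin.val_ne_zero_iff.2 (sub_ne_zero.2 hij.symm)
    have h₁ := (j - i).isLt
    exact ⟨(j - i : Fin n) - 1, n - (j - i : Fin n) - 1, by omega, by omega⟩
  set w : Fin (m₁ + 1 + (m₂ + 1)) → Z := fun l => z (l + i)
  refine ⟨m₁, m₂, fun l => w (Fin.castAdd _ l), fun l => w (Fin.natAdd _ l), by omega, ?_⟩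
  have hj : Fin.natAdd (m₁ + 1) (0 : Fin (m₂ + 1)) = j - i := by ext; simp [hji]
  have hj' : Fin.castAdd (m₂ + 1) (-1 : Fin (m₁ + 1)) = j - i - 1 := by
    ext; simp [Fin.val_sub_one, hji]
  have hi' : Fin.natAdd (m₁ + 1) (-1 : Fin (m₂ + 1)) = -1 := by
    ext; simp
  rw [← cycleProd_comp_add_right z i, ← cycleProd_append, Fin.append_castAdd_natAdd]
  have h₀ : Fin.castAdd (m₂ + 1) (0 : Fin (m₁ + 1)) = 0 := rfl
  simpa only [w, h₀, hj, hj', hi', zero_add, sub_add_cancel, sub_add_eq_add_sub, neg_add_eq_sub]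
    using h

end Cycle

section Potential

variable {V : Type*} (c : V → V → ℝ)

def walkCost {m : ℕ} (w : Fin (m + 1) → V) : ℝ :=
  ∑ i : Fin m, c (w i.castSucc) (w i.succ)

theorem walkCost_snoc {m : ℕ} (w : Fin (m + 1) → V) (v : V) :
    walkCost c (Fin.snoc w v : Fin (m + 2) → V) = walkCost c w + c (w (Fin.last m)) v := by
  rw [walkCost, walkCost, Fin.sum_univ_castSucc]
  simp only [Fin.succ_castSucc, Fin.snoc_castSucc, Fin.succ_last, Fin.snoc_last]

theorem sum_cycle_eq_walkCost_add {m : ℕ} (w : Fin (m + 1) → V) :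
    ∑ i, c (w i) (w (i + 1)) = walkCost c w + c (w (Fin.last m)) (w 0) := by
  simp [walkCost, Fin.sum_univ_castSucc, Fin.coeSucc_eq_succ]

theorem exists_potential [Finite V]
    (hc : ∀ (m : ℕ) (w : Fin (m + 1) → V), 0 ≤ ∑ i, c (w i) (w (i + 1))) :
    ∃ φ : V → ℝ, ∀ a b, φ b ≤ φ a + c a b := by
  let W : V → Set ℝ := fun b =>
    {r | ∃ (m : ℕ) (w : Fin (m + 1) → V), w (Fin.last m) = b ∧ r = walkCost c w}
  have hne : ∀ b, (W b).Nonempty := fun b => ⟨0, 0, fun _ => b, rfl, by simp [walkCost]⟩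
  have hbdd : ∀ b, BddBelow (W b) := by
    intro b
    obtain ⟨C, hC⟩ := (Set.finite_range (Function.uncurry c)).bddAbove
    refine ⟨-C, ?_⟩
    rintro _ ⟨m, w, rfl, rfl⟩
    -- closing the walk into a cycle bounds its cost below
    have h := hc m w
    rw [sum_cycle_eq_walkCost_add] at h
    have hC' : c (w (Fin.last m)) (w 0) ≤ C := hC ⟨(w (Fin.last m), w 0), rfl⟩
    linarith
  refine ⟨fun b => sInf (W b), fun a b => ?_⟩
  have h : ∀ r ∈ W a, sInf (W b) - c a b ≤ r := by
    rintro _ ⟨m, w, rfl, rfl⟩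
    have := csInf_le (hbdd b) ⟨m + 1, Fin.snoc w b, Fin.snoc_last _ _, rfl⟩
    rw [walkCost_snoc] at this
    linarith
  linarith [le_csInf (hne a) h]

end Potential

section PathValue

variable {X Y : Type*} {p : X × Y → ℝ}

noncomputable def pathRatio (p : X × Y → ℝ) {m : ℕ} (x : Fin (m + 1) → X)
    (y : Fin (m + 1) → Y) : ℝ :=
  (∏ i, p (x i, y i)) / ∏ i, p (x i, y (i - 1))

theorem pathRatio_nonneg (hp : ∀ s, 0 ≤ p s) {m : ℕ} (x : Fin (m + 1) → X)
    (y : Fin (m + 1) → Y) : 0 ≤ pathRatio p x y :=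
  div_nonneg (prod_nonneg fun _ _ => hp _) (prod_nonneg fun _ _ => hp _)

theorem pathRatio_eq_cycleProd {m : ℕ} (x : Fin (m + 1) → X) (y : Fin (m + 1) → Y) :
    pathRatio p x y = cycleProd (fun s t : X × Y => p s / p (s.1, t.2)) (fun i => (x i, y i)) :=
  (prod_div_distrib _ _).symm

variable [Fintype X] [Fintype Y]

theorem le_pathValue_iff {m : ℕ} {x : Fin (m + 1) → X} {y : Fin (m + 1) → Y} {r : ℝ}
    (hr : 0 ≤ r) (hR : 0 ≤ pathRatio p x y) :
    r ≤ pathValue p x y ↔ r ^ (m + 1) ≤ pathRatio p x y := by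
  rw [pathValue, ← pathRatio, one_div, Real.le_rpow_inv_iff_of_pos hr hR (by positivity),
    ← Real.rpow_natCast]
  push_cast
  rfl

theorem eps1_nonneg (hp : ∀ s, 0 ≤ p s) : 0 ≤ eps1 p :=
  Real.sInf_nonneg <| by
    rintro _ ⟨m, x, y, -, rfl⟩
    exact Real.rpow_nonneg (pathRatio_nonneg hp x y) _

theorem eps1_le_pathValue (hp : ∀ s, 0 ≤ p s) {m : ℕ} {x : Fin (m + 1) → X}
    {y : Fin (m + 1) → Y} (h : IsAdmissiblePath p x y) : eps1 p ≤ pathValue p x y := by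
  refine csInf_le ⟨0, ?_⟩ ⟨m, x, y, h, rfl⟩
  rintro _ ⟨m, x, y, -, rfl⟩
  exact Real.rpow_nonneg (pathRatio_nonneg hp x y) _

theorem le_eps1 [Nonempty X] [Nonempty Y] (hp : ∀ s, 0 < p s) {r : ℝ}
    (h : ∀ (m : ℕ) (x : Fin (m + 1) → X) (y : Fin (m + 1) → Y), r ≤ pathValue p x y) :
    r ≤ eps1 p := by
  refine le_csInf ⟨_, 0, fun _ => Classical.arbitrary X, fun _ => Classical.arbitrary Y,
    ⟨fun a b _ => Fin.ext (by omega), fun a b _ => Fin.ext (by omega), fun _ => hp _⟩, rfl⟩ ?_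
  rintro _ ⟨m, x, y, -, rfl⟩
  exact h m x y

/-- A repeated `x` (an exchange at `i, j`) or a repeated `y` (an exchange at `i + 1, j + 1`)
splits the closed path into two shorter ones. -/
theorem eps1_pow_le_pathRatio (hp : ∀ s, 0 < p s) (m : ℕ) (x : Fin (m + 1) → X)
    (y : Fin (m + 1) → Y) : eps1 p ^ (m + 1) ≤ pathRatio p x y := by
  induction m using Nat.strong_induction_on with
  | _ m ih =>
  have hp0 : ∀ s, 0 ≤ p s := fun s => (hp s).le
  have split : ∀ {i j : Fin (m + 1)}, i ≠ j →
      p (x i, y i) / p (x i, y (i - 1)) * (p (x j, y j) / p (x j, y (j - 1))) =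
        p (x i, y i) / p (x i, y (j - 1)) * (p (x j, y j) / p (x j, y (i - 1))) →
      eps1 p ^ (m + 1) ≤ pathRatio p x y := by
    intro i j hij h
    obtain ⟨m₁, m₂, z₁, z₂, hm, hz⟩ := exists_cycleProd_eq_mul
      (T := fun s t : X × Y => p s / p (s.1, t.2)) (fun i => (x i, y i)) hij h
    have h₁ := ih m₁ (by omega) (fun i => (z₁ i).1) (fun i => (z₁ i).2)
    have h₂ := ih m₂ (by omega) (fun i => (z₂ i).1) (fun i => (z₂ i).2)
    have h₁' := pathRatio_nonneg hp0 (fun i => (z₁ i).1) (fun i => (z₁ i).2)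
    rw [pathRatio_eq_cycleProd] at h₁ h₂ h₁' ⊢
    rw [hz, show m + 1 = (m₁ + 1) + (m₂ + 1) by omega, pow_add]
    exact mul_le_mul h₁ h₂ (pow_nonneg (eps1_nonneg hp0) _) h₁'
  by_cases hx : Function.Injective x
  · by_cases hy : Function.Injective y
    · exact (le_pathValue_iff (eps1_nonneg hp0) (pathRatio_nonneg hp0 x y)).1
        (eps1_le_pathValue hp0 ⟨hx, hy, fun _ => hp _⟩)
    · obtain ⟨i, j, hyij, hij⟩ := Function.not_injective_iff.1 hy
      exact split (i := i + 1) (j := j + 1) (by simpa using hij) (by simp [hyij])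
  · obtain ⟨i, j, hxij, hij⟩ := Function.not_injective_iff.1 hx
    exact split hij (by rw [hxij]; ring)

theorem inv_mul_le_eps1 [Nonempty X] [Nonempty Y] (hp : ∀ s, 0 < p s) {qX : X → ℝ}
    {qY : Y → ℝ} (hqX : ∀ x, 0 ≤ qX x) (hqY : ∀ y, 0 ≤ qY y) {A B : ℝ} (hA : 0 ≤ A)
    (hB : 0 ≤ B) (hpq : ∀ s, p s ≤ A * (qX s.1 * qY s.2))
    (hqp : ∀ s, qX s.1 * qY s.2 ≤ B * p s) :
    (A * B)⁻¹ ≤ eps1 p := by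
  refine le_eps1 hp fun m x y => ?_
  have hq : ∏ i, qX (x i) * qY (y (i - 1)) = ∏ i, qX (x i) * qY (y i) := by
    simp only [prod_mul_distrib]
    congr 1
    exact Fintype.prod_equiv (Equiv.subRight 1) _ _ fun _ => rfl
  have key : ∏ i, p (x i, y (i - 1)) ≤ (A * B) ^ (m + 1) * ∏ i, p (x i, y i) := calc
    ∏ i, p (x i, y (i - 1)) ≤ ∏ i, A * (qX (x i) * qY (y (i - 1))) :=
      prod_le_prod (fun _ _ => (hp _).le) fun i _ => hpq (x i, y (i - 1))
    _ = A ^ (m + 1) * ∏ i, qX (x i) * qY (y i) := by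
      rw [prod_mul_distrib, prod_const, card_univ, Fintype.card_fin, hq]
    _ ≤ A ^ (m + 1) * ∏ i, B * p (x i, y i) :=
      mul_le_mul_of_nonneg_left (prod_le_prod (fun _ _ => mul_nonneg (hqX _) (hqY _))
        fun i _ => hqp (x i, y i)) (pow_nonneg hA _)
    _ = (A * B) ^ (m + 1) * ∏ i, p (x i, y i) := by
      rw [prod_mul_distrib, prod_const, card_univ, Fintype.card_fin, mul_pow, mul_assoc]
  have hR := pathRatio_nonneg (fun s => (hp s).le) x y
  rcases (mul_nonneg hA hB).eq_or_lt with hAB | hAB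
  · rw [← hAB, inv_zero]
    exact Real.rpow_nonneg hR _
  rw [le_pathValue_iff (inv_nonneg.2 hAB.le) hR, pathRatio, inv_pow,
    le_div_iff₀ (prod_pos fun _ _ => hp _), inv_mul_le_iff₀ (pow_pos hAB _)]
  exact key

theorem eps1_pos [Nonempty X] [Nonempty Y] (hp : ∀ s, 0 < p s) : 0 < eps1 p := by
  obtain ⟨s₀, hs₀⟩ := Finite.exists_min p
  obtain ⟨s₁, hs₁⟩ := Finite.exists_max p
  -- compare `p` with the constant product `1 ⊗ 1`
  refine (inv_pos.2 (mul_pos (hp s₁) (inv_pos.2 (hp s₀)))).trans_le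
    (inv_mul_le_eps1 hp (qX := fun _ => 1) (qY := fun _ => 1) (fun _ => zero_le_one)
      (fun _ => zero_le_one) (hp s₁).le (inv_pos.2 (hp s₀)).le (fun s => by simpa using hs₁ s)
      fun s => ?_)
  simpa [le_inv_mul_iff₀ (hp s₀)] using hs₀ s

theorem mul_log_eps1_le_sum [Nonempty X] [Nonempty Y] (hp : ∀ s, 0 < p s) {m : ℕ}
    (x : Fin (m + 1) → X) (y : Fin (m + 1) → Y) :
    (m + 1) * log (eps1 p) ≤
      ∑ i, (log (p (x i, y i)) - log (p (x (i + 1), y i))) := by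
  have hshift : ∑ i, log (p (x (i + 1), y i)) = ∑ i, log (p (x i, y (i - 1))) :=
    Fintype.sum_equiv (Equiv.addRight 1) _ _ fun i => by simp
  calc (m + 1) * log (eps1 p) = log (eps1 p ^ (m + 1)) := by
        rw [log_pow]; push_cast; ring
    _ ≤ log (pathRatio p x y) :=
        log_le_log (pow_pos (eps1_pos hp) _) (eps1_pow_le_pathRatio hp m x y)
    _ = _ := by
        rw [pathRatio, log_div (prod_pos fun _ _ => hp _).ne' (prod_pos fun _ _ => hp _).ne',
          log_prod fun _ _ => (hp _).ne', log_prod fun _ _ => (hp _).ne',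
          sum_sub_distrib, hshift]

end PathValue

section Sandwich

variable {X Y : Type*} [Fintype X] [Fintype Y] {p : X × Y → ℝ}

theorem exists_product_sandwich [Nonempty X] [Nonempty Y] (hp : ∀ s, 0 < p s) :
    ∃ (f : X → ℝ) (g : Y → ℝ), (∀ x, 0 < f x) ∧ (∀ y, 0 < g y) ∧
      ∀ x y, eps1 p * p (x, y) ≤ f x * g y ∧ f x * g y ≤ p (x, y) := by
  set c : X → X → ℝ := fun x x' => -log (eps1 p) + ⨅ y, (log (p (x, y)) - log (p (x', y)))
  have hc : ∀ (m : ℕ) (w : Fin (m + 1) → X), 0 ≤ ∑ i, c (w i) (w (i + 1)) := by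
    intro m w
    choose y hy using fun i => exists_eq_ciInf_of_finite
      (f := fun y => log (p (w i, y)) - log (p (w (i + 1), y)))
    have := mul_log_eps1_le_sum hp w y
    simp only [c, ← hy, sum_add_distrib, sum_const, card_univ, Fintype.card_fin, nsmul_eq_mul]
    push_cast
    linarith
  obtain ⟨φ, hφ⟩ := exists_potential c hc
  refine ⟨fun x => exp (-φ x), fun y => ⨅ x, p (x, y) * exp (φ x), fun x => exp_pos _,
    fun y => ?_, fun x y => ⟨?_, ?_⟩⟩
  · obtain ⟨x, hx⟩ := exists_eq_ciInf_of_finite (f := fun x => p (x, y) * exp (φ x))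
    beta_reduce
    rw [← hx]
    exact mul_pos (hp _) (exp_pos _)
  · obtain ⟨x', hx'⟩ := exists_eq_ciInf_of_finite (f := fun x => p (x, y) * exp (φ x))
    have hcx : c x' x ≤ -log (eps1 p) + (log (p (x', y)) - log (p (x, y))) := by
      have := ciInf_le (Finite.bddBelow_range fun y => log (p (x', y)) - log (p (x, y))) y
      simp only [c]
      linarith
    have hl : eps1 p * p (x, y) = exp (log (eps1 p) + log (p (x, y))) := by
      rw [exp_add, exp_log (eps1_pos hp), exp_log (hp _)]
    have hr : exp (-φ x) * (p (x', y) * exp (φ x')) = exp (-φ x + log (p (x', y)) + φ x') := by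
      rw [exp_add, exp_add, exp_log (hp _)]
      ring
    beta_reduce
    rw [← hx', hl, hr]
    exact exp_le_exp.2 (by linarith [hφ x' x])
  · calc exp (-φ x) * ⨅ x', p (x', y) * exp (φ x') ≤ exp (-φ x) * (p (x, y) * exp (φ x)) :=
          mul_le_mul_of_nonneg_left (ciInf_le (Finite.bddBelow_range _) x) (exp_pos _).le
      _ = p (x, y) := by rw [mul_left_comm, ← exp_add, neg_add_cancel, exp_zero, mul_one]

end Sandwich

section Spread

open scoped ENNReal

theorem iSup_ofReal_div_le {ι : Type*} {a b : ι → ℝ} {C : ℝ} (hb : ∀ i, 0 < b i)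
    (h : ∀ i, a i ≤ C * b i) :
    ⨆ i, ENNReal.ofReal (a i) / ENNReal.ofReal (b i) ≤ ENNReal.ofReal C :=
  iSup_le fun i => by
    rw [← ENNReal.ofReal_div_of_pos (hb i)]
    exact ENNReal.ofReal_le_ofReal ((div_le_iff₀ (hb i)).2 (h i))

theorem iSup_ofReal_div_ne_zero {ι : Type*} {a b : ι → ℝ} {i : ι} (ha : 0 < a i) :
    ⨆ i, ENNReal.ofReal (a i) / ENNReal.ofReal (b i) ≠ 0 :=
  ((ENNReal.div_pos (ENNReal.ofReal_pos.2 ha).ne' ENNReal.ofReal_ne_top).trans_le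
    (le_iSup (fun i => ENNReal.ofReal (a i) / ENNReal.ofReal (b i)) i)).ne'

theorem le_toReal_mul_of_iSup_ofReal_div_ne_top {ι : Type*} {a b : ι → ℝ} (hb : ∀ i, 0 ≤ b i)
    (h : ⨆ i, ENNReal.ofReal (a i) / ENNReal.ofReal (b i) ≠ ⊤) (i : ι) :
    a i ≤ (⨆ i, ENNReal.ofReal (a i) / ENNReal.ofReal (b i)).toReal * b i := by
  have hi := le_iSup (fun i => ENNReal.ofReal (a i) / ENNReal.ofReal (b i)) i
  rw [ENNReal.div_le_iff_le_mul (Or.inr h) (Or.inl ENNReal.ofReal_ne_top),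
    ← ENNReal.ofReal_toReal h, ← ENNReal.ofReal_mul ENNReal.toReal_nonneg] at hi
  exact (ENNReal.ofReal_le_ofReal_iff (mul_nonneg ENNReal.toReal_nonneg (hb i))).1 hi

theorem IsPMF.exists_pos {S : Type*} [Fintype S] {q : S → ℝ} (hq : IsPMF q) : ∃ s, 0 < q s := by
  by_contra! h
  have := hq.2 ▸ sum_nonpos fun s _ => h s
  norm_num at this

variable {X Y : Type*} [Fintype X] [Fintype Y] {p : X × Y → ℝ}

noncomputable def productSpread (p : X × Y → ℝ) (qX : X → ℝ) (qY : Y → ℝ) : ℝ≥0∞ :=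
  (⨆ s : X × Y, ENNReal.ofReal (p s) / ENNReal.ofReal (qX s.1 * qY s.2)) *
    (⨆ s : X × Y, ENNReal.ofReal (qX s.1 * qY s.2) / ENNReal.ofReal (p s))

theorem exists_productSpread_le [Nonempty X] [Nonempty Y] (hp : ∀ s, 0 < p s) :
    ∃ qX qY, IsPMF qX ∧ IsPMF qY ∧ productSpread p qX qY ≤ ENNReal.ofReal (1 / eps1 p) := by
  obtain ⟨f, g, hf, hg, hfg⟩ := exists_product_sandwich hp
  have hε := eps1_pos hp
  set F := ∑ x, f x
  set G := ∑ y, g y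
  have hF : 0 < F := sum_pos (fun x _ => hf x) univ_nonempty
  have hG : 0 < G := sum_pos (fun y _ => hg y) univ_nonempty
  refine ⟨fun x => f x / F, fun y => g y / G,
    ⟨fun x => (div_pos (hf x) hF).le, by rw [← sum_div, div_self hF.ne']⟩,
    ⟨fun y => (div_pos (hg y) hG).le, by rw [← sum_div, div_self hG.ne']⟩, ?_⟩
  calc productSpread p _ _ ≤ ENNReal.ofReal (F * G / eps1 p) * ENNReal.ofReal (1 / (F * G)) := by
        refine mul_le_mul'
          (iSup_ofReal_div_le (fun s => mul_pos (div_pos (hf _) hF) (div_pos (hg _) hG))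
            fun s => ?_)
          (iSup_ofReal_div_le hp fun s => ?_)
        · have : F * G / eps1 p * (f s.1 / F * (g s.2 / G)) = f s.1 * g s.2 / eps1 p := by
            field_simp
          rw [this, le_div_iff₀ hε, mul_comm]
          exact (hfg s.1 s.2).1
        · have : f s.1 / F * (g s.2 / G) = 1 / (F * G) * (f s.1 * g s.2) := by
            field_simp
          rw [this]
          exact mul_le_mul_of_nonneg_left (hfg s.1 s.2).2 (by positivity)
    _ = ENNReal.ofReal (1 / eps1 p) := by
        rw [← ENNReal.ofReal_mul (by positivity)]
        congr 1
        field_simp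

theorem ofReal_inv_eps1_le_productSpread (hp : ∀ s, 0 < p s) {qX : X → ℝ} {qY : Y → ℝ}
    (hqX : IsPMF qX) (hqY : IsPMF qY) : ENNReal.ofReal (1 / eps1 p) ≤ productSpread p qX qY := by
  obtain ⟨x₀, hx₀⟩ := hqX.exists_pos
  obtain ⟨y₀, hy₀⟩ := hqY.exists_pos
  have : Nonempty X := ⟨x₀⟩
  have : Nonempty Y := ⟨y₀⟩
  rw [productSpread]
  set P := ⨆ s : X × Y, ENNReal.ofReal (p s) / ENNReal.ofReal (qX s.1 * qY s.2)
  set Q := ⨆ s : X × Y, ENNReal.ofReal (qX s.1 * qY s.2) / ENNReal.ofReal (p s)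
  have hP : P ≠ 0 := iSup_ofReal_div_ne_zero (a := p) (hp (x₀, y₀))
  have hQ : Q ≠ 0 :=
    iSup_ofReal_div_ne_zero (a := fun s => qX s.1 * qY s.2) (b := p) (i := (x₀, y₀))
      (mul_pos hx₀ hy₀)
  by_cases hPQ : P * Q = ⊤
  · exact hPQ ▸ le_top
  have hPt : P ≠ ⊤ := fun h => hPQ (by rw [h, ENNReal.top_mul hQ])
  have hQt : Q ≠ ⊤ := fun h => hPQ (by rw [h, ENNReal.mul_top hP])
  have hpq := le_toReal_mul_of_iSup_ofReal_div_ne_top (a := p)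
    (fun s => mul_nonneg (hqX.1 s.1) (hqY.1 s.2)) hPt
  have hqp := le_toReal_mul_of_iSup_ofReal_div_ne_top (b := p) (fun s => (hp s).le) hQt
  have hAB : 0 < P.toReal * Q.toReal := by
    have h := (hpq (x₀, y₀)).trans (mul_le_mul_of_nonneg_left (hqp (x₀, y₀)) ENNReal.toReal_nonneg)
    nlinarith [hp (x₀, y₀)]
  have hε := inv_mul_le_eps1 hp hqX.1 hqY.1 ENNReal.toReal_nonneg ENNReal.toReal_nonneg hpq hqp
  rw [← ENNReal.ofReal_toReal hPt, ← ENNReal.ofReal_toReal hQt,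
    ← ENNReal.ofReal_mul ENNReal.toReal_nonneg, one_div]
  exact ENNReal.ofReal_le_ofReal (inv_le_of_inv_le₀ hAB hε)

end Spread

/-- for a fully supported pmf `p` on `X × Y`,
`F(p) = 1/ε₁(p)`, where `F(p)` is the minimum over product pmfs `q = q_X · q_Y` of
`(max_{x,y} p(x,y)/q(x,y)) · (max_{x,y} q(x,y)/p(x,y))`, ratios being computed in
`ℝ≥0∞` so that `c/0 = ∞` for `c > 0`. -/
theorem F_eq_inv_eps1 {X Y : Type*} [Fintype X] [Fintype Y]
    (p : X × Y → ℝ) (hp : IsPMF p) (hpos : ∀ s, 0 < p s) :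
    sInf { v : ENNReal | ∃ (qX : X → ℝ) (qY : Y → ℝ), IsPMF qX ∧ IsPMF qY ∧
        v = (⨆ s : X × Y, ENNReal.ofReal (p s) / ENNReal.ofReal (qX s.1 * qY s.2)) *
            (⨆ s : X × Y, ENNReal.ofReal (qX s.1 * qY s.2) / ENNReal.ofReal (p s)) }
      = ENNReal.ofReal (1 / eps1 p) := by
  obtain ⟨⟨x₀, y₀⟩, -⟩ := hp.exists_pos
  have : Nonempty X := ⟨x₀⟩
  have : Nonempty Y := ⟨y₀⟩
  refine le_antisymm ?_ (le_sInf ?_)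
  · obtain ⟨qX, qY, hqX, hqY, hle⟩ := exists_productSpread_le hpos
    refine (sInf_le ?_).trans hle
    exact ⟨qX, qY, hqX, hqY, rfl⟩
  · rintro _ ⟨qX, qY, hqX, hqY, rfl⟩
    exact ofReal_inv_eps1_le_productSpread hpos hqX hqY
end

section
/- Let A and R be finite sets, let p_A be a pmf on A with p_A(a) > 0 for all a, let ε ∈ [0,1], let B = A ⊔ {e}, and let p_{AB}(a,b) = (1−ε)·p_A(a)·1[b = a] + ε·p_A(a)·1[b = e] (an erasure channel with erasure probability ε). Let q : A → pmfs on R be any channel. Then there exists a channel p_{R|B} : B → pmfs on R such that Σ_{b∈B} p_{AB}(a,b)·p_{R|B}(r|b) = p_A(a)·q(r|a) for all a ∈ A and r ∈ R, if and only if Σ_{r∈R} min_{a∈A} q(r|a) ≥ ε. -/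
/-- The joint pmf of the input `A` and the output `B = A ⊕ {e}` of an erasure channel
with erasure probability `ε`; the erasure symbol `e` is `Sum.inr ()`. -/
noncomputable def erasurePair {A : Type*} [Fintype A] [DecidableEq A]
    (pA : A → ℝ) (ε : ℝ) : A → A ⊕ Unit → ℝ :=
  fun a b => Sum.elim (fun a' => if a' = a then (1 - ε) * pA a else 0)
    (fun _ => ε * pA a) b

open Finset

theorem IsPMF.nonempty {S : Type*} [Fintype S] {p : S → ℝ} (hp : IsPMF p) : Nonempty S := by
  by_contra h
  have := hp.2
  simp_all

theorem IsPMF.exists_mixture_eq {S : Type*} [Fintype S] {q s : S → ℝ} (hq : IsPMF q)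
    (hs : IsPMF s) {ε : ℝ} (hε0 : 0 ≤ ε) (hε1 : ε ≤ 1) (hle : ∀ x, ε * s x ≤ q x) :
    ∃ p, IsPMF p ∧ ∀ x, (1 - ε) * p x + ε * s x = q x := by
  rcases hε1.lt_or_eq with hlt | rfl
  · have hne : 1 - ε ≠ 0 := by linarith
    refine ⟨fun x => (q x - ε * s x) / (1 - ε),
      ⟨fun x => div_nonneg (sub_nonneg.2 (hle x)) (by linarith), ?_⟩,
      fun x => by field_simp; ring⟩
    rw [← sum_div, sum_sub_distrib, ← mul_sum, hq.2, hs.2, mul_one, div_self hne]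
  · -- `s ≤ q` and both have total mass one, so `s = q`
    have hsq : ∀ x, s x = q x := fun x =>
      (sum_eq_sum_iff_of_le fun x _ => by simpa using hle x).1
        (hs.2.trans hq.2.symm) x (mem_univ x)
    exact ⟨q, hq, fun x => by simp [hsq]⟩

theorem exists_isPMF_mul_le_iff {S : Type*} [Fintype S] [Nonempty S] {f : S → ℝ}
    (hf : ∀ x, 0 ≤ f x) {ε : ℝ} (hε : 0 ≤ ε) :
    (∃ s, IsPMF s ∧ ∀ x, ε * s x ≤ f x) ↔ ε ≤ ∑ x, f x := by
  constructor
  · rintro ⟨s, hs, hle⟩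
    calc ε = ∑ x, ε * s x := by rw [← mul_sum, hs.2, mul_one]
      _ ≤ ∑ x, f x := sum_le_sum fun x _ => hle x
  · intro h
    rcases (sum_nonneg fun x _ => hf x).eq_or_lt with hzero | hpos
    · have hε0 : ε = 0 := by linarith
      refine ⟨fun _ => (Fintype.card S : ℝ)⁻¹, ⟨fun _ => by positivity, ?_⟩,
        fun x => by simp [hε0, hf x]⟩
      rw [sum_const, card_univ, nsmul_eq_mul, mul_inv_cancel₀ (by simp)]
    · refine ⟨fun x => f x / ∑ y, f y, ⟨fun x => div_nonneg (hf x) hpos.le, ?_⟩, fun x => ?_⟩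
      · rw [← sum_div, div_self hpos.ne']
      · calc ε * (f x / ∑ y, f y) = ε / (∑ y, f y) * f x := by ring
          _ ≤ f x := mul_le_of_le_one_left (hf x) ((div_le_one hpos).2 h)

theorem exists_mixture_with_common_component_iff {A R : Type*} [Fintype R]
    {q : A → R → ℝ} (hq : ∀ a, IsPMF (q a)) {ε : ℝ} (hε0 : 0 ≤ ε) (hε1 : ε ≤ 1) :
    (∃ p : A ⊕ Unit → R → ℝ, (∀ b, IsPMF (p b)) ∧
        ∀ a r, (1 - ε) * p (.inl a) r + ε * p (.inr ()) r = q a r) ↔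
      ∃ s, IsPMF s ∧ ∀ a r, ε * s r ≤ q a r := by
  constructor
  · rintro ⟨p, hp, heq⟩
    refine ⟨p (.inr ()), hp _, fun a r => ?_⟩
    have := mul_nonneg (sub_nonneg.2 hε1) ((hp (.inl a)).1 r)
    linarith [heq a r]
  · rintro ⟨s, hs, hle⟩
    choose p hp heq using fun a => (hq a).exists_mixture_eq hs hε0 hε1 (hle a)
    exact ⟨Sum.elim p fun _ => s, by rintro (a | _) <;> simp [hp, hs], heq⟩

theorem sum_erasurePair_mul {A : Type*} [Fintype A] [DecidableEq A] (pA : A → ℝ) (ε : ℝ)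
    (p : A ⊕ Unit → ℝ) (a : A) :
    ∑ b, erasurePair pA ε a b * p b = pA a * ((1 - ε) * p (.inl a) + ε * p (.inr ())) := by
  simp only [erasurePair, Fintype.sum_sum_type, Sum.elim_inl, Sum.elim_inr, ite_mul, zero_mul,
    sum_ite_eq', mem_univ, if_true, Fintype.sum_unique]
  ring

/-- for an erasure channel from `A` to `B = A ⊕ {e}` with erasure
probability `ε` and any channel `q` from `A` to `R`, there is a channel `p_{R|B}`
with `Σ_b p_{AB}(a,b)·p_{R|B}(r|b) = p_A(a)·q(r|a)` for all `a, r` iff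
`Σ_r min_a q(r|a) ≥ ε`. -/
theorem erasure_degradation_iff {A R : Type*} [Fintype A] [Fintype R] [DecidableEq A]
    (pA : A → ℝ) (hpA : IsPMF pA) (hpos : ∀ a, 0 < pA a)
    (ε : ℝ) (hε : ε ∈ Set.Icc (0 : ℝ) 1)
    (q : A → R → ℝ) (hq : ∀ a, IsPMF (q a)) :
    (∃ pRB : A ⊕ Unit → R → ℝ, (∀ b, IsPMF (pRB b)) ∧
        ∀ a r, ∑ b : A ⊕ Unit, erasurePair pA ε a b * pRB b r = pA a * q a r)
      ↔ ε ≤ ∑ r, ⨅ a, q a r := by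
  obtain ⟨hε0, hε1⟩ := hε
  have : Nonempty A := hpA.nonempty
  have : Nonempty R := (hq (Classical.arbitrary A)).nonempty
  have hbdd (r : R) : BddBelow (Set.range fun a => q a r) := (Set.finite_range _).bddBelow
  calc _ ↔ ∃ p : A ⊕ Unit → R → ℝ, (∀ b, IsPMF (p b)) ∧
          ∀ a r, (1 - ε) * p (.inl a) r + ε * p (.inr ()) r = q a r := by
        refine exists_congr fun p => and_congr_right fun _ => forall_congr' fun a =>
          forall_congr' fun r => ?_
        rw [sum_erasurePair_mul, mul_right_inj' (hpos a).ne']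
    _ ↔ ∃ s, IsPMF s ∧ ∀ a r, ε * s r ≤ q a r :=
        exists_mixture_with_common_component_iff hq hε0 hε1
    _ ↔ ∃ s, IsPMF s ∧ ∀ r, ε * s r ≤ ⨅ a, q a r := by
        simp only [le_ciInf_iff (hbdd _)]
        exact exists_congr fun s => and_congr_right fun _ => forall_comm
    _ ↔ ε ≤ ∑ r, ⨅ a, q a r :=
        exists_isPMF_mul_le_iff (fun r => le_ciInf fun a => (hq a).1 r) hε0
end

section
/- Let p_{XY} be a pmf on X×Y (X, Y finite) with strictly positive marginals, ε ∈ [0,1], and let p_{XYZ} be the corresponding erasure source. Then the one-way secret-key quantity S_ow(X;Y‖Z) equals zero if and only if ε ≤ 1 − η(p_{Y|X}), where p_{Y|X}(y|x) = p_{XY}(x,y)/p_X(x). -/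
/-- Mutual information `I(A;B)` of a joint (sub)pmf on `A × B`, with the convention
`0·log 0 = 0` (automatic for real multiplication since `Real.log 0 = 0`). -/
noncomputable def MI {A B : Type} [Fintype A] [Fintype B] (p : A → B → ℝ) : ℝ :=
  ∑ a, ∑ b, p a b * Real.log (p a b / ((∑ b', p a b') * (∑ a', p a' b)))

/-- Conditional mutual information `I(A;B|V) = Σ_v p(v)·I(A;B|V=v)` of a joint
(sub)pmf on `V × A × B`. -/
noncomputable def condMI {V A B : Type} [Fintype V] [Fintype A] [Fintype B]
    (p : V → A → B → ℝ) : ℝ :=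
  ∑ v, (∑ a, ∑ b, p v a b) * MI (fun a b => p v a b / (∑ a', ∑ b', p v a' b'))

/-- The strong data processing constant `s*(qA, W)`: the supremum over finite sets `U`
and channels `p(u|a)` with `I(U;A) > 0` of `I(U;B)/I(U;A)`, computed under
`qA(a)·W(b|a)·p(u|a)`. -/
noncomputable def sdpc {A B : Type} [Fintype A] [Fintype B]
    (qA : A → ℝ) (W : A → B → ℝ) : ℝ :=
  sSup { r : ℝ | ∃ (U : Type) (iU : Fintype U) (pu : A → U → ℝ), by
    letI := iU
    exact (∀ a, IsPMF (pu a)) ∧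
      0 < MI (fun u a => qA a * pu a u) ∧
      r = MI (fun u b => ∑ a, qA a * pu a u * W a b) / MI (fun u a => qA a * pu a u) }

/-- `η(W) = max_{q} s*(q, W)`, the maximum of the strong data processing constant
over input pmfs. -/
noncomputable def eta {A B : Type} [Fintype A] [Fintype B] (W : A → B → ℝ) : ℝ :=
  sSup { r : ℝ | ∃ qA : A → ℝ, IsPMF qA ∧ r = sdpc qA W }

open Classical in
/-- The erasure source with base pmf `p_XY` and erasure probability `ε`: Eve's
alphabet is `Z = {e} ⊔ (X × Y)`, modelled as `Option (X × Y)` with `e = none`. -/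
noncomputable def erasureSource {X Y : Type} [Fintype X] [Fintype Y]
    (pXY : X → Y → ℝ) (ε : ℝ) : X → Y → Option (X × Y) → ℝ :=
  fun x y z =>
    match z with
    | none => ε * pXY x y
    | some w => if w = (x, y) then (1 - ε) * pXY x y else 0

/-- The one-way secret-key quantity `S_ow(X;Y‖Z)`: the supremum over finite `V, U` and
joint pmfs `p(v,u,x,y,z) = p(v,u,x)·p_{YZ|X}(y,z|x)` whose `(X,Y,Z)`-marginal is
`p_XYZ`, satisfying the Markov chain `V → U → X → (Y,Z)` (i.e. `p(x|v,u) = p(x|u)`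
whenever defined), of `I(U;Y|V) − I(U;Z|V)`. -/
noncomputable def Sow {X Y Z : Type} [Fintype X] [Fintype Y] [Fintype Z]
    (p : X → Y → Z → ℝ) : ℝ :=
  sSup { r : ℝ | ∃ (V U : Type) (iV : Fintype V) (iU : Fintype U)
      (q : V → U → X → ℝ), by
    letI := iV; letI := iU
    exact (∀ v u x, 0 ≤ q v u x) ∧
      (∑ v, ∑ u, ∑ x, q v u x) = 1 ∧
      (∀ x, ∑ v, ∑ u, q v u x = ∑ y, ∑ z, p x y z) ∧
      (∀ v u x, 0 < (∑ x', q v u x') →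
        q v u x / (∑ x', q v u x')
          = (∑ v', q v' u x) / (∑ v', ∑ x', q v' u x')) ∧
      r = condMI (fun v u y => ∑ x, ∑ z, q v u x * (p x y z / (∑ y', ∑ z', p x y' z')))
        - condMI (fun v u z => ∑ x, ∑ y, q v u x * (p x y z / (∑ y', ∑ z', p x y' z'))) }

open Finset Real

lemma sum_mul_log_div_sum_le {ι : Type*} (s : Finset ι) {a b : ι → ℝ}
    (ha : ∀ i ∈ s, 0 ≤ a i) (hb : ∀ i ∈ s, 0 ≤ b i) (hab : ∀ i ∈ s, b i = 0 → a i = 0) :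
    (∑ i ∈ s, a i) * log ((∑ i ∈ s, a i) / ∑ i ∈ s, b i) ≤ ∑ i ∈ s, a i * log (a i / b i) := by
  rcases (sum_nonneg ha).eq_or_lt with hA | hA
  · have h0 := (sum_eq_zero_iff_of_nonneg ha).1 hA.symm
    rw [← hA, zero_mul, sum_eq_zero fun i hi => by rw [h0 i hi, zero_mul]]
  have hB : 0 < ∑ i ∈ s, b i := by
    refine (sum_nonneg hb).lt_of_ne fun hB => hA.ne' ?_
    have h0 := (sum_eq_zero_iff_of_nonneg hb).1 hB.symm
    exact sum_eq_zero fun i hi => hab i hi (h0 i hi)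
  set c := (∑ i ∈ s, a i) / ∑ i ∈ s, b i
  have hc : 0 < c := div_pos hA hB
  -- Gibbs' inequality `a - c b ≤ a log (a / (c b))`, summed over `s`
  have gibbs : ∀ i ∈ s, a i - c * b i ≤ a i * log (a i / b i) - a i * log c := by
    intro i hi
    rcases (ha i hi).eq_or_lt with h0 | h0
    · rw [← h0]; simpa using mul_nonneg hc.le (hb i hi)
    have hbi : 0 < b i := (hb i hi).lt_of_ne fun h => h0.ne' (hab i hi h.symm)
    have h1 := mul_le_mul_of_nonneg_left
      (one_sub_inv_le_log_of_pos (x := a i / (c * b i)) (by positivity)) h0.le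
    rw [inv_div, mul_comm c, ← div_div, log_div (by positivity) hc.ne'] at h1
    have h2 : a i * (1 - b i * c / a i) = a i - c * b i := by field_simp
    linarith
  have h := sum_le_sum gibbs
  rw [sum_sub_distrib, sum_sub_distrib, ← mul_sum, ← sum_mul, div_mul_cancel₀ _ hB.ne'] at h
  linarith

lemma exists_mem_gt_of_lt_sSup {s : Set ℝ} {c : ℝ} (hc : 0 ≤ c) (h : c < sSup s) :
    ∃ r ∈ s, c < r :=
  exists_lt_of_lt_csSup (Set.nonempty_iff_ne_empty.2 fun hs => by
    rw [hs, Real.sSup_empty] at h; linarith) h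

lemma sum_sum_mul_eq_sum {A S T : Type*} [Fintype S] [Fintype T] (m : A → S → ℝ) {W : S → T → ℝ}
    (hW : ∀ s, ∑ t, W s t = 1) (a : A) : ∑ t, ∑ s, m a s * W s t = ∑ s, m a s := by
  rw [sum_comm]; simp [← mul_sum, hW]

lemma isPMF_div_sum {S : Type*} [Fintype S] {f : S → ℝ} (hf : ∀ s, 0 ≤ f s)
    (hpos : 0 < ∑ s, f s) : IsPMF fun s => f s / ∑ s', f s' :=
  ⟨fun s => div_nonneg (hf s) hpos.le, by rw [← sum_div, div_self hpos.ne']⟩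

lemma exists_isPMF_mul_eq {U A : Type*} [Fintype U] [Nonempty U] {a : U → A → ℝ}
    (ha : ∀ u x, 0 ≤ a u x) :
    ∃ pu : A → U → ℝ, (∀ x, IsPMF (pu x)) ∧ ∀ u x, (∑ u', a u' x) * pu x u = a u x := by
  refine ⟨fun x u => if ∑ u', a u' x = 0 then (Fintype.card U : ℝ)⁻¹ else a u x / ∑ u', a u' x,
    fun x => ?_, fun u x => ?_⟩ <;> dsimp only <;> by_cases h : ∑ u', a u' x = 0
  · simp only [h, if_true]
    exact ⟨fun u => by positivity, by simp⟩
  · simp only [h, if_false]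
    exact ⟨fun u => div_nonneg (ha u x) (sum_nonneg fun u _ => ha u x),
      by rw [← sum_div, div_self h]⟩
  · rw [h, zero_mul, ((sum_eq_zero_iff_of_nonneg fun u _ => ha u x).1 h u (mem_univ u))]
  · rw [if_neg h, mul_div_cancel₀ _ h]

section WeightedMI

variable {A B : Type*} [Fintype A] [Fintype B]

/-- The mutual information of an unnormalized joint mass function: its total mass times the
mutual information of its normalization (see `mul_MI_div_sum`). -/
noncomputable def weightedMI (m : A → B → ℝ) : ℝ :=
  ∑ a, ∑ b, m a b * log (m a b * (∑ a', ∑ b', m a' b') / ((∑ b', m a b') * ∑ a', m a' b))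

lemma weightedMI_of_sum_eq_zero {m : A → B → ℝ} (h : ∑ a, ∑ b, m a b = 0) :
    weightedMI m = 0 := by
  simp [weightedMI, h]

lemma weightedMI_const_mul (c : ℝ) (m : A → B → ℝ) :
    weightedMI (fun a b => c * m a b) = c * weightedMI m := by
  rcases eq_or_ne c 0 with rfl | hc
  · simp [weightedMI]
  have hlog : ∀ a b,
      c * m a b * (c * ∑ a', ∑ b', m a' b') / ((c * ∑ b', m a b') * (c * ∑ a', m a' b))
      = m a b * (∑ a', ∑ b', m a' b') / ((∑ b', m a b') * ∑ a', m a' b) := by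
    intro a b; field_simp
  simp only [weightedMI, ← mul_sum, hlog]
  simp only [mul_sum, mul_assoc]

lemma marginals_pos {m : A → B → ℝ} (hm : ∀ a b, 0 ≤ m a b) {a : A} {b : B}
    (h : 0 < m a b) :
    0 < ∑ b', m a b' ∧ 0 < ∑ a', m a' b ∧ 0 < ∑ a', ∑ b', m a' b' := by
  have hrow := h.trans_le (single_le_sum (fun b _ => hm a b) (mem_univ b))
  refine ⟨hrow, h.trans_le (single_le_sum (fun a _ => hm a b) (mem_univ a)), ?_⟩
  exact hrow.trans_le (single_le_sum (fun a _ => sum_nonneg fun b _ => hm a b) (mem_univ a))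

lemma weightedMI_nonneg {m : A → B → ℝ} (hm : ∀ a b, 0 ≤ m a b) : 0 ≤ weightedMI m := by
  set M := ∑ a', ∑ b', m a' b'
  -- log-sum inequality against the product of the marginals, which has the same mass `M`
  have h := sum_mul_log_div_sum_le (univ : Finset (A × B)) (a := fun p => m p.1 p.2)
    (b := fun p => (∑ b', m p.1 b') * (∑ a', m a' p.2) / M) (fun p _ => hm p.1 p.2)
    (fun p _ => div_nonneg (mul_nonneg (sum_nonneg fun b _ => hm p.1 b)
      (sum_nonneg fun a _ => hm a p.2)) (sum_nonneg fun a _ => sum_nonneg fun b _ => hm a b))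
    (fun p _ hp => by
      by_contra hne
      obtain ⟨h1, h2, h3⟩ := marginals_pos hm ((hm p.1 p.2).lt_of_ne' hne)
      exact (div_pos (mul_pos h1 h2) h3).ne' hp)
  simp only [Fintype.sum_prod_type, ← sum_div, ← sum_mul_sum] at h
  rw [sum_comm (f := fun b a => m a b), mul_self_div_self, log_div_self, mul_zero] at h
  simpa only [weightedMI, div_div_eq_mul_div] using h

lemma weightedMI_le_mul_card {m : A → B → ℝ} (hm : ∀ a b, 0 ≤ m a b) :
    weightedMI m ≤ (∑ a, ∑ b, m a b) * Fintype.card B := by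
  set M := ∑ a', ∑ b', m a' b'
  have hterm : ∀ a b, m a b * log (m a b * M / ((∑ b', m a b') * ∑ a', m a' b))
      ≤ M * (m a b / ∑ a', m a' b) := by
    intro a b
    rcases (hm a b).eq_or_lt with h0 | h0
    · simp [← h0]
    obtain ⟨hrow, hcol, hM⟩ := marginals_pos hm h0
    have hle : m a b * M / ((∑ b', m a b') * ∑ a', m a' b) ≤ M / ∑ a', m a' b := by
      rw [div_le_div_iff₀ (by positivity) hcol]
      nlinarith [single_le_sum (fun b _ => hm a b) (mem_univ b), mul_pos hM hcol]
    have hlog := (log_le_sub_one_of_pos (x := m a b * M / ((∑ b', m a b') * ∑ a', m a' b))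
      (by positivity)).trans (sub_le_self _ zero_le_one)
    calc m a b * log (m a b * M / ((∑ b', m a b') * ∑ a', m a' b))
        ≤ m a b * (M / ∑ a', m a' b) := mul_le_mul_of_nonneg_left (hlog.trans hle) h0.le
      _ = M * (m a b / ∑ a', m a' b) := by ring
  calc weightedMI m ≤ ∑ a, ∑ b, M * (m a b / ∑ a', m a' b) :=
        sum_le_sum fun a _ => sum_le_sum fun b _ => hterm a b
    _ = ∑ b, M * ((∑ a, m a b) / ∑ a', m a' b) := by
        rw [sum_comm]; simp only [← mul_sum, sum_div]
    _ ≤ ∑ _b : B, M := sum_le_sum fun b _ =>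
        mul_le_of_le_one_right (sum_nonneg fun a _ => sum_nonneg fun b _ => hm a b)
          (div_self_le_one _)
    _ = M * Fintype.card B := by simp [mul_comm]

lemma weightedMI_pair {S T : Type*} [Fintype S] [Fintype T] (m : A → S → ℝ)
    {W : S → T → ℝ} (hW : ∀ s, ∑ t, W s t = 1) :
    weightedMI (fun a (st : S × T) => m a st.1 * W st.1 st.2) = weightedMI m := by
  have hrow : ∀ a, ∑ st : S × T, m a st.1 * W st.1 st.2 = ∑ s, m a s := by
    simp [Fintype.sum_prod_type, ← mul_sum, hW]
  have hcol : ∀ s t, ∑ a, m a s * W s t = (∑ a, m a s) * W s t := fun s t => (sum_mul ..).symm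
  simp only [weightedMI, hrow, hcol]
  refine sum_congr rfl fun a _ => ?_
  rw [Fintype.sum_prod_type]
  refine sum_congr rfl fun s _ => ?_
  set L := m a s * log (m a s * (∑ a', ∑ s', m a' s') / ((∑ s', m a s') * ∑ a', m a' s))
  have hterm : ∀ t, m a s * W s t * log (m a s * W s t * (∑ a', ∑ s', m a' s')
      / ((∑ s', m a s') * ((∑ a', m a' s) * W s t))) = W s t * L := by
    intro t
    rcases eq_or_ne (W s t) 0 with h | h
    · simp [h]
    rw [show m a s * W s t * (∑ a', ∑ s', m a' s') = m a s * (∑ a', ∑ s', m a' s') * W s t by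
        ring, show (∑ s', m a s') * ((∑ a', m a' s) * W s t)
          = (∑ s', m a s') * (∑ a', m a' s) * W s t by ring, mul_div_mul_right _ _ h]
    ring
  simp only [hterm, ← sum_mul, hW, one_mul]

lemma weightedMI_sum_le {S T : Type*} [Fintype S] [Fintype T] {t : A → S → T → ℝ}
    (ht : ∀ a s y, 0 ≤ t a s y) :
    weightedMI (fun a y => ∑ s, t a s y) ≤ weightedMI (fun a (sy : S × T) => t a sy.1 sy.2) := by
  have hrow : ∀ a, ∑ sy : S × T, t a sy.1 sy.2 = ∑ y, ∑ s, t a s y := by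
    intro a; rw [Fintype.sum_prod_type, sum_comm]
  set M := ∑ a, ∑ y, ∑ s, t a s y
  set R := fun a => ∑ y, ∑ s, t a s y
  simp only [weightedMI, hrow]
  apply sum_le_sum; intro a _
  rw [Fintype.sum_prod_type]
  conv_rhs => rw [sum_comm]
  apply sum_le_sum; intro y _
  -- log-sum inequality over `s`, against the product of the `a`- and `(s, y)`-marginals
  have h := sum_mul_log_div_sum_le univ (a := fun s => t a s y)
    (b := fun s => R a * (∑ a', t a' s y) / M) (fun s _ => ht a s y)
    (fun s _ => div_nonneg (mul_nonneg (sum_nonneg fun y _ => sum_nonneg fun s _ => ht a s y)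
      (sum_nonneg fun a _ => ht a s y))
      (sum_nonneg fun a _ => sum_nonneg fun y _ => sum_nonneg fun s _ => ht a s y))
    (fun s _ hs => by
      by_contra hne
      obtain ⟨h1, h2, h3⟩ := marginals_pos (m := fun a (sy : S × T) => t a sy.1 sy.2)
        (fun a sy => ht a sy.1 sy.2) (b := (s, y)) ((ht a s y).lt_of_ne' hne)
      simp only [hrow] at h1 h3
      exact (div_pos (mul_pos h1 h2) h3).ne' hs)
  simp only [← sum_div, ← mul_sum] at h
  rw [sum_comm (f := fun s a' => t a' s y)] at h
  simpa only [div_div_eq_mul_div] using h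

lemma weightedMI_comp_le {S T : Type*} [Fintype S] [Fintype T] {m : A → S → ℝ}
    (hm : ∀ a s, 0 ≤ m a s) {W : S → T → ℝ} (hW : ∀ s, IsPMF (W s)) :
    weightedMI (fun a t => ∑ s, m a s * W s t) ≤ weightedMI m :=
  (weightedMI_sum_le fun a s t => mul_nonneg (hm a s) ((hW s).1 t)).trans_eq
    (weightedMI_pair m fun s => (hW s).2)

/-- The joint mass function of `A` and the output of an erasure channel with erasure
probability `ε` fed with `B`; `none` is the erasure symbol. -/
def eraseJoint (ε : ℝ) (m : A → B → ℝ) : A → Option B → ℝ :=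
  fun a z => z.elim (ε * ∑ b, m a b) fun b => (1 - ε) * m a b

lemma weightedMI_eraseJoint (ε : ℝ) (m : A → B → ℝ) :
    weightedMI (eraseJoint ε m) = (1 - ε) * weightedMI m := by
  have hrow : ∀ a, ∑ z, eraseJoint ε m a z = ∑ b, m a b := by
    intro a; simp only [eraseJoint, Fintype.sum_option, Option.elim, ← mul_sum]; ring
  simp only [weightedMI, hrow]
  simp only [eraseJoint, Fintype.sum_option, Option.elim, ← mul_sum]
  conv_rhs => rw [mul_sum]
  apply sum_congr rfl; intro a _
  rw [show (∑ b, m a b) * (ε * ∑ a', ∑ b, m a' b) = ε * (∑ b, m a b) * ∑ a', ∑ b, m a' b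
    by ring, log_div_self, mul_zero, zero_add]
  conv_rhs => rw [mul_sum]
  apply sum_congr rfl; intro b _
  rcases eq_or_ne (1 - ε) 0 with h | h
  · simp [h]
  rw [mul_assoc (1 - ε), mul_assoc (1 - ε), mul_left_comm _ (1 - ε), mul_div_mul_left _ _ h]

lemma weightedMI_option {m : Option A → B → ℝ} (h : ∀ b, m none b = 0) :
    weightedMI m = weightedMI fun a b => m (some a) b := by
  simp [weightedMI, Fintype.sum_option, h]

lemma weightedMI_eq_zero_of_single_row {m : A → B → ℝ} (a₀ : A)
    (h : ∀ a, a ≠ a₀ → ∀ b, m a b = 0) : weightedMI m = 0 := by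
  have hcol : ∀ b, ∑ a, m a b = m a₀ b := fun b =>
    sum_eq_single a₀ (fun a _ ha => h a ha b) (by simp)
  have htot : ∑ a, ∑ b, m a b = ∑ b, m a₀ b :=
    sum_eq_single a₀ (fun a _ ha => sum_eq_zero fun b _ => h a ha b) (by simp)
  refine sum_eq_zero fun a _ => sum_eq_zero fun b _ => ?_
  rcases eq_or_ne a a₀ with rfl | ha
  · rw [hcol, htot, mul_comm (∑ b, m a b), log_div_self, mul_zero]
  · rw [h a ha b, zero_mul]

end WeightedMI

section MutualInformation

variable {A B : Type} [Fintype A] [Fintype B]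

lemma mul_MI_div_sum (m : A → B → ℝ) :
    (∑ a, ∑ b, m a b) * MI (fun a b => m a b / ∑ a', ∑ b', m a' b') = weightedMI m := by
  set M := ∑ a', ∑ b', m a' b'
  rcases eq_or_ne M 0 with hM | hM
  · rw [hM, zero_mul, weightedMI_of_sum_eq_zero hM]
  have hlog : ∀ a b, m a b / M / ((∑ b', m a b' / M) * ∑ a', m a' b / M)
      = m a b * M / ((∑ b', m a b') * ∑ a', m a' b) := by
    intro a b
    rw [← sum_div, ← sum_div, div_mul_div_comm, div_div_eq_mul_div]
    congr 1
    field_simp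
  unfold weightedMI
  simp only [MI, hlog]
  conv_lhs => rw [mul_sum]
  refine sum_congr rfl fun a _ => ?_
  conv_lhs => rw [mul_sum]
  refine sum_congr rfl fun b _ => ?_
  rw [← mul_assoc, mul_div_cancel₀ _ hM]

lemma condMI_eq_sum_weightedMI {V : Type} [Fintype V] (p : V → A → B → ℝ) :
    condMI p = ∑ v, weightedMI (p v) :=
  sum_congr rfl fun v _ => mul_MI_div_sum (p v)

lemma weightedMI_eq_MI {m : A → B → ℝ} (h : ∑ a, ∑ b, m a b = 1) : weightedMI m = MI m := by
  simpa [h] using (mul_MI_div_sum m).symm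

lemma MI_nonneg {m : A → B → ℝ} (hm : ∀ a b, 0 ≤ m a b) (h : ∑ a, ∑ b, m a b = 1) :
    0 ≤ MI m :=
  weightedMI_eq_MI h ▸ weightedMI_nonneg hm

lemma MI_comp_le {m : A → B → ℝ} (hm : ∀ a b, 0 ≤ m a b) (h : ∑ a, ∑ b, m a b = 1)
    {C : Type} [Fintype C] {W : B → C → ℝ} (hW : ∀ b, IsPMF (W b)) :
    MI (fun a c => ∑ b, m a b * W b c) ≤ MI m := by
  have h' : ∑ a, ∑ c, ∑ b, m a b * W b c = 1 := by
    simpa only [sum_sum_mul_eq_sum m fun b => (hW b).2] using h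
  rw [← weightedMI_eq_MI h, ← weightedMI_eq_MI h']
  exact weightedMI_comp_le hm hW

end MutualInformation

section StrongDataProcessing

variable {A B : Type} [Fintype A] [Fintype B] {qA : A → ℝ} {W : A → B → ℝ}

lemma MI_comp_div_MI_le_one (hqA : IsPMF qA) (hW : ∀ a, IsPMF (W a)) {U : Type} [Fintype U]
    {pu : A → U → ℝ} (hpu : ∀ a, IsPMF (pu a)) (hpos : 0 < MI fun u a => qA a * pu a u) :
    MI (fun u b => ∑ a, qA a * pu a u * W a b) / MI (fun u a => qA a * pu a u) ≤ 1 := by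
  rw [div_le_one hpos]
  refine MI_comp_le (fun u a => mul_nonneg (hqA.1 a) ((hpu a).1 u)) ?_ hW
  rw [sum_comm]
  simpa only [← mul_sum, fun a => (hpu a).2, mul_one] using hqA.2

lemma le_sdpc (hqA : IsPMF qA) (hW : ∀ a, IsPMF (W a)) {U : Type} [Fintype U]
    {pu : A → U → ℝ} (hpu : ∀ a, IsPMF (pu a)) (hpos : 0 < MI fun u a => qA a * pu a u) :
    MI (fun u b => ∑ a, qA a * pu a u * W a b) / MI (fun u a => qA a * pu a u) ≤ sdpc qA W := by
  refine le_csSup ⟨1, ?_⟩ ⟨U, inferInstance, pu, hpu, hpos, rfl⟩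
  rintro _ ⟨U', _, pu', hpu', hpos', rfl⟩
  exact MI_comp_div_MI_le_one hqA hW hpu' hpos'

lemma sdpc_le_one (hqA : IsPMF qA) (hW : ∀ a, IsPMF (W a)) : sdpc qA W ≤ 1 := by
  refine Real.sSup_le ?_ zero_le_one
  rintro _ ⟨U, _, pu, hpu, hpos, rfl⟩
  exact MI_comp_div_MI_le_one hqA hW hpu hpos

lemma sdpc_le_eta (hqA : IsPMF qA) (hW : ∀ a, IsPMF (W a)) : sdpc qA W ≤ eta W := by
  refine le_csSup ⟨1, ?_⟩ ⟨qA, hqA, rfl⟩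
  rintro _ ⟨q, hq, rfl⟩
  exact sdpc_le_one hq hW

lemma MI_comp_le_eta_mul {U : Type} [Fintype U] {a : U → A → ℝ} (ha : ∀ u x, 0 ≤ a u x)
    (ha1 : ∑ u, ∑ x, a u x = 1) (hW : ∀ x, IsPMF (W x)) :
    MI (fun u y => ∑ x, a u x * W x y) ≤ eta W * MI a := by
  rcases (MI_nonneg ha ha1).eq_or_lt with h0 | hpos
  · rw [← h0, mul_zero]
    exact (MI_comp_le ha ha1 hW).trans h0.ge
  have : Nonempty U := by
    by_contra hU
    simp [not_nonempty_iff.1 hU, MI] at hpos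
  obtain ⟨pu, hpu, hfac⟩ := exists_isPMF_mul_eq ha
  have hqA : IsPMF fun x => ∑ u, a u x := ⟨fun x => sum_nonneg fun u _ => ha u x, by rwa [sum_comm]⟩
  have h := le_sdpc hqA hW hpu (by simpa only [hfac] using hpos)
  simp only [hfac] at h
  rw [← div_le_iff₀ hpos]
  exact h.trans (sdpc_le_eta hqA hW)

lemma weightedMI_comp_le_eta_mul {U : Type} [Fintype U] {m : U → A → ℝ}
    (hm : ∀ u x, 0 ≤ m u x) (hW : ∀ x, IsPMF (W x)) :
    weightedMI (fun u y => ∑ x, m u x * W x y) ≤ eta W * weightedMI m := by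
  have hWrow : ∀ x, ∑ y, W x y = 1 := fun x => (hW x).2
  set M := ∑ u, ∑ x, m u x
  rcases (sum_nonneg fun u _ => sum_nonneg fun x _ => hm u x : 0 ≤ M).eq_or_lt with hM | hM
  · rw [weightedMI_of_sum_eq_zero hM.symm, weightedMI_of_sum_eq_zero, mul_zero]
    simpa only [sum_sum_mul_eq_sum m hWrow] using hM.symm
  set a := fun u x => m u x / M
  have ha1 : ∑ u, ∑ x, a u x = 1 := by
    simp only [a, ← sum_div]; exact div_self hM.ne'
  have hm_eq : m = fun u x => M * a u x := funext₂ fun u x => (mul_div_cancel₀ _ hM.ne').symm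
  have haW1 : ∑ u, ∑ y, ∑ x, a u x * W x y = 1 := by simpa only [sum_sum_mul_eq_sum a hWrow]
  rw [hm_eq]
  simp only [mul_assoc, ← mul_sum]
  rw [weightedMI_const_mul, weightedMI_const_mul, weightedMI_eq_MI ha1, weightedMI_eq_MI haW1,
    mul_left_comm]
  exact mul_le_mul_of_nonneg_left
    (MI_comp_le_eta_mul (fun u x => div_nonneg (hm u x) hM.le) ha1 hW) hM.le

lemma exists_lt_MI_comp_of_lt_eta {c : ℝ} (hc : 0 ≤ c) (h : c < eta W) :
    ∃ (U : Type) (_ : Fintype U) (a : U → A → ℝ), (∀ u x, 0 ≤ a u x) ∧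
      ∑ u, ∑ x, a u x = 1 ∧ c * MI a < MI (fun u y => ∑ x, a u x * W x y) := by
  obtain ⟨_, ⟨qA, hqA, rfl⟩, hlt⟩ := exists_mem_gt_of_lt_sSup hc h
  obtain ⟨_, ⟨U, _, pu, hpu, hpos, rfl⟩, hlt⟩ := exists_mem_gt_of_lt_sSup hc hlt
  refine ⟨U, inferInstance, fun u x => qA x * pu x u,
    fun u x => mul_nonneg (hqA.1 x) ((hpu x).1 u), ?_, (lt_div_iff₀ hpos).1 hlt⟩
  rw [sum_comm]
  simpa only [← mul_sum, fun x => (hpu x).2, mul_one] using hqA.2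

end StrongDataProcessing

/-- The Markov chain condition `V → U → X`: `p(x|v,u) = p(x|u)` whenever defined. -/
def IsMarkovChain {V U X : Type*} [Fintype V] [Fintype X] (q : V → U → X → ℝ) : Prop :=
  ∀ v u x, 0 < ∑ x', q v u x' →
    q v u x / ∑ x', q v u x' = (∑ v', q v' u x) / ∑ v', ∑ x', q v' u x'

lemma isMarkovChain_of_eq_zero {V U X : Type*} [Fintype V] [Fintype X]
    {q : V → U → X → ℝ} (f : U → V) (h : ∀ v u x, v ≠ f u → q v u x = 0) :
    IsMarkovChain q := by
  intro v u x hpos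
  obtain rfl : v = f u := by
    by_contra hne
    simp [h v u _ hne] at hpos
  rw [sum_eq_single (f u) (fun v' _ hne => h v' u x hne) (by simp),
    sum_eq_single (f u) (fun v' _ hne => sum_eq_zero fun x' _ => h v' u x' hne) (by simp)]

def sowRates {X Y Z : Type} [Fintype X] [Fintype Y] [Fintype Z] (p : X → Y → Z → ℝ) : Set ℝ :=
  { r : ℝ | ∃ (V U : Type) (iV : Fintype V) (iU : Fintype U) (q : V → U → X → ℝ), by
    letI := iV; letI := iU
    exact (∀ v u x, 0 ≤ q v u x) ∧
      (∑ v, ∑ u, ∑ x, q v u x) = 1 ∧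
      (∀ x, ∑ v, ∑ u, q v u x = ∑ y, ∑ z, p x y z) ∧
      IsMarkovChain q ∧
      r = condMI (fun v u y => ∑ x, ∑ z, q v u x * (p x y z / (∑ y', ∑ z', p x y' z')))
        - condMI (fun v u z => ∑ x, ∑ y, q v u x * (p x y z / (∑ y', ∑ z', p x y' z'))) }

lemma Sow_eq_sSup_sowRates {X Y Z : Type} [Fintype X] [Fintype Y] [Fintype Z]
    (p : X → Y → Z → ℝ) : Sow p = sSup (sowRates p) :=
  rfl

/-- `I(U;Y|V) - I(U;Z|V)` for the erasure source over the channel `W`, in the form given by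
`condMI_sub_condMI_erasureSource`. -/
noncomputable def erasureRate {V U X Y : Type*} [Fintype V] [Fintype U] [Fintype X] [Fintype Y]
    (W : X → Y → ℝ) (ε : ℝ) (q : V → U → X → ℝ) : ℝ :=
  ∑ v, (weightedMI (fun u y => ∑ x, q v u x * W x y) - (1 - ε) * weightedMI (q v))

section ErasureRate

variable {V U X Y : Type} [Fintype V] [Fintype U] [Fintype X] [Fintype Y] {W : X → Y → ℝ}
  {ε : ℝ} {q : V → U → X → ℝ}

lemma erasureRate_le_card (hW : ∀ x, IsPMF (W x)) (hε : ε ≤ 1) (hq : ∀ v u x, 0 ≤ q v u x)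
    (hq1 : ∑ v, ∑ u, ∑ x, q v u x = 1) : erasureRate W ε q ≤ Fintype.card Y :=
  calc erasureRate W ε q ≤ ∑ v, (∑ u, ∑ x, q v u x) * Fintype.card Y := by
        refine sum_le_sum fun v _ => ?_
        have hY := weightedMI_le_mul_card (m := fun u y => ∑ x, q v u x * W x y)
          fun u y => sum_nonneg fun x _ => mul_nonneg (hq v u x) ((hW x).1 y)
        rw [funext (sum_sum_mul_eq_sum (q v) fun x => (hW x).2)] at hY
        linarith [mul_nonneg (sub_nonneg.2 hε) (weightedMI_nonneg (hq v))]
    _ = Fintype.card Y := by rw [← sum_mul, hq1, one_mul]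

lemma erasureRate_nonpos (hW : ∀ x, IsPMF (W x)) (hε : ε ≤ 1 - eta W)
    (hq : ∀ v u x, 0 ≤ q v u x) : erasureRate W ε q ≤ 0 :=
  sum_nonpos fun v _ => by
    have hY := weightedMI_comp_le_eta_mul (hq v) hW
    have := mul_le_mul_of_nonneg_right (by linarith : eta W ≤ 1 - ε) (weightedMI_nonneg (hq v))
    linarith

end ErasureRate

/-- With `V = true` (total weight `δ`), `U = some u` is drawn jointly with `X` from `a`; with
`V = false`, `U = none` and `X` is drawn from what remains of `p`. -/
def timeSharing {U X : Type*} [Fintype U] (p : X → ℝ) (δ : ℝ) (a : U → X → ℝ) :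
    Bool → Option U → X → ℝ
  | true, some u, x => δ * a u x
  | false, none, x => p x - δ * ∑ u, a u x
  | _, _, _ => 0

section TimeSharing

variable {U X : Type*} [Fintype U] {p : X → ℝ} {δ : ℝ} {a : U → X → ℝ}

lemma timeSharing_nonneg (ha : ∀ u x, 0 ≤ a u x) (hδ : 0 ≤ δ)
    (hp : ∀ x, δ * ∑ u, a u x ≤ p x) : ∀ v u x, 0 ≤ timeSharing p δ a v u x := by
  rintro (_ | _) (_ | u) x <;> simp only [timeSharing, le_refl]
  · exact sub_nonneg.2 (hp x)
  · exact mul_nonneg hδ (ha u x)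

lemma sum_timeSharing (x : X) : ∑ v, ∑ u, timeSharing p δ a v u x = p x := by
  simp [timeSharing, Fintype.sum_option, mul_sum]

lemma isMarkovChain_timeSharing [Fintype X] : IsMarkovChain (timeSharing p δ a) :=
  isMarkovChain_of_eq_zero Option.isSome (by rintro (_ | _) (_ | u) x h <;> simp_all [timeSharing])

lemma erasureRate_timeSharing [Fintype X] {Y : Type*} [Fintype Y] (W : X → Y → ℝ) (ε : ℝ) :
    erasureRate W ε (timeSharing p δ a)
      = δ * (weightedMI (fun u y => ∑ x, a u x * W x y) - (1 - ε) * weightedMI a) := by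
  rw [erasureRate, Fintype.sum_bool,
    weightedMI_eq_zero_of_single_row (m := timeSharing p δ a false) none
      (by rintro (_ | u) h x <;> simp_all [timeSharing]),
    weightedMI_eq_zero_of_single_row (m := fun u y => ∑ x, timeSharing p δ a false u x * W x y)
      none (by rintro (_ | u) h y <;> simp_all [timeSharing]),
    weightedMI_option (m := timeSharing p δ a true) fun x => rfl,
    weightedMI_option (m := fun u y => ∑ x, timeSharing p δ a true u x * W x y)
      (by simp [timeSharing])]
  simp only [timeSharing, mul_assoc, ← mul_sum, weightedMI_const_mul]
  ring

end TimeSharing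

section ErasureSource

variable {X Y : Type} [Fintype X] [Fintype Y] {pXY : X → Y → ℝ} {ε : ℝ}

lemma sum_erasureSource (pXY : X → Y → ℝ) (ε : ℝ) (x : X) (y : Y) :
    ∑ z, erasureSource pXY ε x y z = pXY x y := by
  simp only [erasureSource, Fintype.sum_option, sum_ite_eq', mem_univ, ↓reduceIte]; ring

lemma condMI_sub_condMI_erasureSource (hX : ∀ x, 0 < ∑ y, pXY x y) {V U : Type} [Fintype V]
    [Fintype U] (q : V → U → X → ℝ) :
    condMI (fun v u y => ∑ x, ∑ z, q v u x *
        (erasureSource pXY ε x y z / ∑ y', ∑ z', erasureSource pXY ε x y' z'))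
      - condMI (fun v u z => ∑ x, ∑ y, q v u x *
        (erasureSource pXY ε x y z / ∑ y', ∑ z', erasureSource pXY ε x y' z'))
      = erasureRate (fun x y => pXY x y / ∑ y', pXY x y') ε q := by
  have hWrow : ∀ x, ∑ y, pXY x y / ∑ y', pXY x y' = 1 := fun x => by
    rw [← sum_div, div_self (hX x).ne']
  have hden : ∀ x, ∑ y', ∑ z', erasureSource pXY ε x y' z' = ∑ y', pXY x y' := fun x =>
    sum_congr rfl fun y _ => sum_erasureSource pXY ε x y
  have hY : ∀ v u y, ∑ x, ∑ z, q v u x *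
      (erasureSource pXY ε x y z / ∑ y', ∑ z', erasureSource pXY ε x y' z')
      = ∑ x, q v u x * (pXY x y / ∑ y', pXY x y') := fun v u y =>
    sum_congr rfl fun x _ => by rw [← mul_sum, ← sum_div, sum_erasureSource, hden]
  have hZ : ∀ v u z, ∑ x, ∑ y, q v u x *
      (erasureSource pXY ε x y z / ∑ y', ∑ z', erasureSource pXY ε x y' z')
      = eraseJoint ε (fun u (xy : X × Y) => q v u xy.1 * (pXY xy.1 xy.2 / ∑ y', pXY xy.1 y'))
          u z := by
    rintro v u (_ | ⟨x₀, y₀⟩) <;> simp only [hden] <;>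
      simp only [eraseJoint, Option.elim, erasureSource]
    · simp only [Fintype.sum_prod_type, mul_sum]
      exact sum_congr rfl fun x _ => sum_congr rfl fun y _ => by ring
    · classical
      simp only [ite_div, zero_div, mul_ite, mul_zero]
      rw [← Fintype.sum_prod_type' (f := fun x y => if (x₀, y₀) = (x, y) then
        q v u x * ((1 - ε) * pXY x y / ∑ y', pXY x y') else 0), sum_ite_eq]
      simp only [mem_univ, if_true]
      ring
  simp only [hY, hZ]
  rw [condMI_eq_sum_weightedMI, condMI_eq_sum_weightedMI, erasureRate, ← sum_sub_distrib]
  simp only [weightedMI_eraseJoint, weightedMI_pair _ hWrow]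

lemma erasureRate_mem_sowRates (hsum : ∑ x, ∑ y, pXY x y = 1) (hX : ∀ x, 0 < ∑ y, pXY x y)
    {V U : Type} [Fintype V] [Fintype U] {q : V → U → X → ℝ} (hq : ∀ v u x, 0 ≤ q v u x)
    (hmarg : ∀ x, ∑ v, ∑ u, q v u x = ∑ y, pXY x y) (hmarkov : IsMarkovChain q) :
    erasureRate (fun x y => pXY x y / ∑ y', pXY x y') ε q ∈ sowRates (erasureSource pXY ε) := by
  refine ⟨V, U, inferInstance, inferInstance, q, hq, ?_, fun x => ?_, hmarkov,
    (condMI_sub_condMI_erasureSource hX q).symm⟩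
  · calc ∑ v, ∑ u, ∑ x, q v u x = ∑ v, ∑ x, ∑ u, q v u x := sum_congr rfl fun v _ => sum_comm
      _ = ∑ x, ∑ v, ∑ u, q v u x := sum_comm
      _ = 1 := by simp only [hmarg, hsum]
  · simp only [hmarg, sum_erasureSource]

lemma exists_erasureRate_eq_of_mem_sowRates (hX : ∀ x, 0 < ∑ y, pXY x y) {r : ℝ}
    (hr : r ∈ sowRates (erasureSource pXY ε)) :
    ∃ (V U : Type) (_ : Fintype V) (_ : Fintype U) (q : V → U → X → ℝ),
      (∀ v u x, 0 ≤ q v u x) ∧ ∑ v, ∑ u, ∑ x, q v u x = 1 ∧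
        r = erasureRate (fun x y => pXY x y / ∑ y', pXY x y') ε q := by
  obtain ⟨V, U, _, _, q, hq, hq1, -, -, rfl⟩ := hr
  exact ⟨V, U, _, _, q, hq, hq1, condMI_sub_condMI_erasureSource hX q⟩

lemma timeSharing_mem_sowRates (hsum : ∑ x, ∑ y, pXY x y = 1) (hX : ∀ x, 0 < ∑ y, pXY x y)
    {U : Type} [Fintype U] {a : U → X → ℝ} (ha : ∀ u x, 0 ≤ a u x) {δ : ℝ} (hδ : 0 ≤ δ)
    (hδp : ∀ x, δ * ∑ u, a u x ≤ ∑ y, pXY x y) :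
    δ * (weightedMI (fun u y => ∑ x, a u x * (pXY x y / ∑ y', pXY x y'))
      - (1 - ε) * weightedMI a) ∈ sowRates (erasureSource pXY ε) := by
  rw [← erasureRate_timeSharing (p := fun x => ∑ y, pXY x y)]
  exact erasureRate_mem_sowRates hsum hX (timeSharing_nonneg ha hδ hδp) sum_timeSharing
    isMarkovChain_timeSharing

lemma zero_mem_sowRates_erasureSource (hsum : ∑ x, ∑ y, pXY x y = 1)
    (hX : ∀ x, 0 < ∑ y, pXY x y) : 0 ∈ sowRates (erasureSource pXY ε) := by
  simpa using timeSharing_mem_sowRates (ε := ε) hsum hX (a := fun (_ : Unit) (_ : X) => 0)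
    (fun _ _ => le_rfl) le_rfl fun x => by simpa using (hX x).le

lemma exists_pos_mem_sowRates_erasureSource (hnn : ∀ x y, 0 ≤ pXY x y)
    (hsum : ∑ x, ∑ y, pXY x y = 1) (hX : ∀ x, 0 < ∑ y, pXY x y) (hε : ε ≤ 1)
    (hlt : 1 - eta (fun x y => pXY x y / ∑ y', pXY x y') < ε) :
    ∃ r ∈ sowRates (erasureSource pXY ε), 0 < r := by
  have hW : ∀ x, IsPMF fun y => pXY x y / ∑ y', pXY x y' := fun x => isPMF_div_sum (hnn x) (hX x)
  obtain ⟨U, _, a, ha, ha1, hgain⟩ := exists_lt_MI_comp_of_lt_eta (sub_nonneg.2 hε) (by linarith)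
  have haW1 : ∑ u, ∑ y, ∑ x, a u x * (pXY x y / ∑ y', pXY x y') = 1 := by
    simpa only [sum_sum_mul_eq_sum a fun x => (hW x).2] using ha1
  -- `δ = min_x p_X(x)` keeps `p_X - δ p_{X|V=true}` nonnegative
  obtain ⟨x₀, -, hx₀⟩ := exists_min_image univ (fun x => ∑ y, pXY x y)
    (nonempty_of_sum_ne_zero (by rw [hsum]; exact one_ne_zero))
  refine ⟨_, timeSharing_mem_sowRates hsum hX ha (hX x₀).le fun x => ?_, ?_⟩
  · have : ∑ u, a u x ≤ 1 := by
      rw [← ha1, sum_comm]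
      exact single_le_sum (fun x _ => sum_nonneg fun u _ => ha u x) (mem_univ x)
    nlinarith [hx₀ x (mem_univ x), hX x₀]
  · rw [weightedMI_eq_MI ha1, weightedMI_eq_MI haW1]
    exact mul_pos (hX x₀) (by linarith)

end ErasureSource

theorem Sow_eq_zero_iff_general {X Y : Type} [Fintype X] [Fintype Y]
    (pXY : X → Y → ℝ) (hnn : ∀ x y, 0 ≤ pXY x y) (hsum : ∑ x, ∑ y, pXY x y = 1)
    (hX : ∀ x, 0 < ∑ y, pXY x y)
    (ε : ℝ) (hε : ε ∈ Set.Icc (0 : ℝ) 1) :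
    Sow (erasureSource pXY ε) = 0
      ↔ ε ≤ 1 - eta (fun x y => pXY x y / ∑ y', pXY x y') := by
  have hW : ∀ x, IsPMF fun y => pXY x y / ∑ y', pXY x y' := fun x => isPMF_div_sum (hnn x) (hX x)
  have hbdd : BddAbove (sowRates (erasureSource pXY ε)) := ⟨Fintype.card Y, fun r hr => by
    obtain ⟨V, U, _, _, q, hq, hq1, rfl⟩ := exists_erasureRate_eq_of_mem_sowRates hX hr
    exact erasureRate_le_card hW hε.2 hq hq1⟩
  rw [Sow_eq_sSup_sowRates]
  constructor
  · intro h0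
    by_contra! hlt
    obtain ⟨r, hr, hr0⟩ := exists_pos_mem_sowRates_erasureSource hnn hsum hX hε.2 hlt
    linarith [le_csSup hbdd hr]
  · intro hε'
    refine le_antisymm (Real.sSup_le (fun r hr => ?_) le_rfl)
      (le_csSup hbdd (zero_mem_sowRates_erasureSource hsum hX))
    obtain ⟨V, U, _, _, q, hq, -, rfl⟩ := exists_erasureRate_eq_of_mem_sowRates hX hr
    exact erasureRate_nonpos hW hε' hq

/-- for an erasure source with base pmf `p_XY` (with strictly positive
marginals) and erasure probability `ε ∈ [0,1]`, the one-way secret-key quantity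
`S_ow(X;Y‖Z)` is zero iff `ε ≤ 1 − η(p_{Y|X})`. -/
theorem Sow_eq_zero_iff {X Y : Type} [Fintype X] [Fintype Y]
    (pXY : X → Y → ℝ) (hnn : ∀ x y, 0 ≤ pXY x y) (hsum : ∑ x, ∑ y, pXY x y = 1)
    (hX : ∀ x, 0 < ∑ y, pXY x y) (hY : ∀ y, 0 < ∑ x, pXY x y)
    (ε : ℝ) (hε : ε ∈ Set.Icc (0 : ℝ) 1) :
    Sow (erasureSource pXY ε) = 0
      ↔ ε ≤ 1 - eta (fun x y => pXY x y / ∑ y', pXY x y') :=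
  Sow_eq_zero_iff_general pXY hnn hsum hX ε hε
end
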